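/- Kleisli categories via full images: let T be a relative monad on J : A ⥤ E and let L ⊣_J R (L : A ⥤ C) be a resolution of T. Then the Kleisli category Kl(T) is isomorphic, via an identity-on-objects functor commuting with the inclusions from A, to the full image of L (the category with objects those of A and hom-sets Hom_C(L.obj x, L.obj y)). In particular, for the trivial relative monad on a fully faithful J, Kl(J) is isomorphic under A to the full image of J. -/

import Mathlib

open CategoryTheory CategoryTheory.Limits

universe v₁ v₂ v₃ v₄ v₅ u₁ u₂ u₃ u₄ u₅

/-- A relative monad on `J : A ⥤ E` in Kleisli-triple form. -/
structure RelMonad {A : Type u₁} {E : Type u₂} [Category.{v₁} A] [Category.{v₂} E]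
    (J : A ⥤ E) where
  obj : A → E
  unit : ∀ x : A, J.obj x ⟶ obj x
  ext : ∀ {x y : A}, (J.obj x ⟶ obj y) → (obj x ⟶ obj y)
  ext_unit : ∀ x : A, ext (unit x) = 𝟙 (obj x)
  unit_ext : ∀ {x y : A} (f : J.obj x ⟶ obj y), unit x ≫ ext f = f
  ext_ext : ∀ {x y z : A} (f : J.obj x ⟶ obj y) (g : J.obj y ⟶ obj z),
    ext (f ≫ ext g) = ext f ≫ ext g

/-- The trivial relative monad on `J`, with underlying data `J` itself. -/
def trivRelMonad {A : Type u₁} {E : Type u₂} [Category.{v₁} A] [Category.{v₂} E]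
    (J : A ⥤ E) : RelMonad J where
  obj x := J.obj x
  unit x := 𝟙 (J.obj x)
  ext f := f
  ext_unit x := rfl
  unit_ext f := Category.id_comp f
  ext_ext f g := rfl

/-- A relative adjunction `L ⊣_J R`: bijections `(L.obj x ⟶ c) ≃ (J.obj x ⟶ R.obj c)`,
natural in `x` and `c`. -/
structure RelAdjCore {A : Type u₁} {E : Type u₂} {C : Type u₃}
    [Category.{v₁} A] [Category.{v₂} E] [Category.{v₃} C]
    (J : A ⥤ E) (L : A ⥤ C) (R : C ⥤ E) where
  equiv : ∀ (x : A) (c : C), (L.obj x ⟶ c) ≃ (J.obj x ⟶ R.obj c)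
  nat_left : ∀ {x' x : A} (a : x' ⟶ x) {c : C} (g : L.obj x ⟶ c),
    equiv x' c (L.map a ≫ g) = J.map a ≫ equiv x c g
  nat_right : ∀ {x : A} {c c' : C} (g : L.obj x ⟶ c) (h : c ⟶ c'),
    equiv x c' (g ≫ h) = equiv x c g ≫ R.map h

/-- The relative monad on `J` induced by a relative adjunction `L ⊣_J R`. -/
def RelAdjCore.induced {A : Type u₁} {E : Type u₂} {C : Type u₃}
    [Category.{v₁} A] [Category.{v₂} E] [Category.{v₃} C]
    {J : A ⥤ E} {L : A ⥤ C} {R : C ⥤ E} (adj : RelAdjCore J L R) : RelMonad J where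
  obj x := R.obj (L.obj x)
  unit x := adj.equiv x (L.obj x) (𝟙 (L.obj x))
  ext {x y} f := R.map ((adj.equiv x (L.obj y)).symm f)
  ext_unit x := by simp
  unit_ext {x y} f := by
    rw [← adj.nat_right, Category.id_comp, Equiv.apply_symm_apply]
  ext_ext {x y z} f g := by
    show R.map ((adj.equiv x (L.obj z)).symm
        (f ≫ R.map ((adj.equiv y (L.obj z)).symm g))) =
      R.map ((adj.equiv x (L.obj y)).symm f) ≫ R.map ((adj.equiv y (L.obj z)).symm g)
    rw [← R.map_comp]
    congr 1
    apply (adj.equiv x (L.obj z)).injective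
    rw [Equiv.apply_symm_apply, adj.nat_right, Equiv.apply_symm_apply]

/-- The Kleisli category of a relative monad: objects those of `A`,
hom-sets `Hom(x, y) := (J.obj x ⟶ T.obj y)`. -/
def RelKleisli {A : Type u₁} {E : Type u₂} [Category.{v₁} A] [Category.{v₂} E]
    {J : A ⥤ E} (_T : RelMonad J) : Type u₁ := A

instance RelKleisli.category {A : Type u₁} {E : Type u₂} [Category.{v₁} A]
    [Category.{v₂} E] {J : A ⥤ E} (T : RelMonad J) : Category.{v₂} (RelKleisli T) where
  Hom x y := J.obj x ⟶ T.obj y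
  id x := T.unit x
  comp {x y z} f g := (f : J.obj x ⟶ T.obj y) ≫ T.ext g
  id_comp {x y} f := T.unit_ext f
  comp_id {x y} f := by
    have e : ∀ f' : J.obj x ⟶ T.obj y, f' ≫ T.ext (T.unit y) = f' := by
      intro f'; exact (congrArg (fun k => f' ≫ k) (T.ext_unit y)).trans (Category.comp_id f')
    exact e f
  assoc {w x y z} f g h := by
    have e : ∀ (f' : J.obj w ⟶ T.obj x) (g' : J.obj x ⟶ T.obj y)
        (h' : J.obj y ⟶ T.obj z),
        (f' ≫ T.ext g') ≫ T.ext h' = f' ≫ T.ext (g' ≫ T.ext h') := by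
      intro f' g' h'
      exact (Category.assoc _ _ _).trans (congrArg (fun k => f' ≫ k) (T.ext_ext g' h').symm)
    exact e f g h

/-- The identity-on-objects Kleisli inclusion. -/
def kT {A : Type u₁} {E : Type u₂} [Category.{v₁} A] [Category.{v₂} E]
    {J : A ⥤ E} (T : RelMonad J) : A ⥤ RelKleisli T where
  obj x := x
  map {x y} a := (J.map a ≫ T.unit y : J.obj x ⟶ T.obj y)
  map_id x := by
    have e : J.map (𝟙 x) ≫ T.unit x = T.unit x := by simp
    exact e
  map_comp {x y z} a b := by
    have e : J.map (a ≫ b) ≫ T.unit z =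
        (J.map a ≫ T.unit y) ≫ T.ext (J.map b ≫ T.unit z) := by
      rw [Category.assoc, T.unit_ext, J.map_comp, Category.assoc]
    exact e

/-- The comparison functor `Kl(T) ⥤ E`, sending `x` to `T₀ x` and `f` to `f†`. -/
def vT {A : Type u₁} {E : Type u₂} [Category.{v₁} A] [Category.{v₂} E]
    {J : A ⥤ E} (T : RelMonad J) : RelKleisli T ⥤ E where
  obj x := T.obj x
  map {x y} f := T.ext f
  map_id x := T.ext_unit x
  map_comp {x y z} f g := by
    have e : T.ext ((f : J.obj x ⟶ T.obj y) ≫ T.ext g) = T.ext f ≫ T.ext g :=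
      T.ext_ext f g
    exact e

/-- The identity-on-objects functor from `A` to the full image of `L`. -/
def toFullImage {A : Type u₁} {C : Type u₃} [Category.{v₁} A] [Category.{v₃} C]
    (L : A ⥤ C) : A ⥤ InducedCategory C L.obj where
  obj x := x
  map a := InducedCategory.homMk (L.map a)
  map_id x := InducedCategory.hom_ext (L.map_id x)
  map_comp a b := InducedCategory.hom_ext (L.map_comp a b)

/-- The trivial relative adjunction `J ⊣_J 𝟭`. -/
def trivRelAdj {A : Type u₁} {E : Type u₂} [Category.{v₁} A] [Category.{v₂} E]
    (J : A ⥤ E) : RelAdjCore J J (𝟭 E) where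
  equiv x c := Equiv.refl _
  nat_left := by intros; rfl
  nat_right := by intros; rfl

theorem stmt19_aux {A : Type u₁} {E : Type u₂} {C : Type u₃}
    [Category.{v₁} A] [Category.{v₂} E] [Category.{v₃} C]
    (J : A ⥤ E) (L : A ⥤ C) (R : C ⥤ E)
    (adj : RelAdjCore J L R) :
    ∃ (Φ : RelKleisli adj.induced ⥤ InducedCategory C L.obj)
        (Ψ : InducedCategory C L.obj ⥤ RelKleisli adj.induced),
      Φ ⋙ Ψ = 𝟭 (RelKleisli adj.induced) ∧ Ψ ⋙ Φ = 𝟭 (InducedCategory C L.obj) ∧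
      (∀ x : A, Φ.obj x = x) ∧ kT adj.induced ⋙ Φ = toFullImage L := by
  refine ⟨⟨fun x => x, fun {x y} f => InducedCategory.homMk ((adj.equiv x (L.obj y)).symm f), ?_, ?_⟩,
    ⟨fun x => x, fun {x y} g => adj.equiv x (L.obj y) g.hom, ?_, ?_⟩, ?_, ?_, fun _ => rfl, ?_⟩
  · intro x
    apply InducedCategory.hom_ext
    show (adj.equiv x (L.obj x)).symm (adj.induced.unit x) = 𝟙 (L.obj x)
    exact (adj.equiv x (L.obj x)).symm_apply_apply _
  · intro x y z f g
    apply InducedCategory.hom_ext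
    show (adj.equiv x (L.obj z)).symm ((f : J.obj x ⟶ _) ≫ adj.induced.ext g) =
      (adj.equiv x (L.obj y)).symm f ≫ (adj.equiv y (L.obj z)).symm g
    apply (adj.equiv x (L.obj z)).injective
    rw [Equiv.apply_symm_apply]
    refine Eq.trans ?_ (adj.nat_right _ _).symm
    exact (congrArg (· ≫ R.map ((adj.equiv y (L.obj z)).symm g))
      ((adj.equiv x (L.obj y)).apply_symm_apply f)).symm
  · intro x
    show adj.equiv x (L.obj x) (𝟙 (L.obj x)) = adj.induced.unit x
    rfl
  · intro x y z f g
    show adj.equiv x (L.obj z) (f.hom ≫ g.hom) =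
      (adj.equiv x (L.obj y) f.hom ≫ adj.induced.ext (adj.equiv y (L.obj z) g.hom) :
        J.obj x ⟶ adj.induced.obj z)
    show adj.equiv x (L.obj z) (f.hom ≫ g.hom) = adj.equiv x (L.obj y) f.hom ≫
      R.map ((adj.equiv y (L.obj z)).symm (adj.equiv y (L.obj z) g.hom))
    rw [Equiv.symm_apply_apply, adj.nat_right]
  · refine CategoryTheory.Functor.ext (fun x => rfl) (fun x y f => ?_)
    show adj.equiv x (L.obj y) ((adj.equiv x (L.obj y)).symm f) = _
    simp [Equiv.apply_symm_apply]
    exact (adj.equiv x (L.obj y)).apply_symm_apply f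
  · refine CategoryTheory.Functor.ext (fun x => rfl) (fun x y f => ?_)
    apply InducedCategory.hom_ext
    show (adj.equiv x (L.obj y)).symm (adj.equiv x (L.obj y) f.hom) = _
    simp [Equiv.symm_apply_apply]
  · refine CategoryTheory.Functor.ext (fun x => rfl) (fun x y a => ?_)
    apply InducedCategory.hom_ext
    show (adj.equiv x (L.obj y)).symm
      ((J.map a ≫ adj.induced.unit y : J.obj x ⟶ adj.induced.obj y)) = _
    apply (adj.equiv x (L.obj y)).injective
    refine ((adj.equiv x (L.obj y)).apply_symm_apply _).trans ?_
    show J.map a ≫ adj.equiv y (L.obj y) (𝟙 _) = _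
    rw [← adj.nat_left, Category.comp_id]
    simp [toFullImage]
    congr 1
    show L.map a = 𝟙 (L.obj x) ≫ L.map a ≫ 𝟙 (L.obj y)
    simp

/-- The Kleisli category of a relative monad `T` is isomorphic, via an
identity-on-objects functor commuting with the inclusions from `A`, to the full image
of the left adjoint of any resolution of `T`.  In particular, for the trivial
relative monad on a fully faithful `J`, `Kl(J)` is isomorphic under `A` to the full
image of `J`. -/
theorem stmt19 {A : Type u₁} {E : Type u₂} {C : Type u₃}
    [Category.{v₁} A] [Category.{v₂} E] [Category.{v₃} C]
    (J : A ⥤ E) (L : A ⥤ C) (R : C ⥤ E) (T : RelMonad J)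
    (adj : RelAdjCore J L R) (hres : adj.induced = T) :
    (∃ (Φ : RelKleisli T ⥤ InducedCategory C L.obj)
        (Ψ : InducedCategory C L.obj ⥤ RelKleisli T),
      Φ ⋙ Ψ = 𝟭 (RelKleisli T) ∧ Ψ ⋙ Φ = 𝟭 (InducedCategory C L.obj) ∧
      (∀ x : A, Φ.obj x = x) ∧ kT T ⋙ Φ = toFullImage L) ∧
    (J.Full → J.Faithful →
      ∃ (Φ : RelKleisli (trivRelMonad J) ⥤ InducedCategory E J.obj)
        (Ψ : InducedCategory E J.obj ⥤ RelKleisli (trivRelMonad J)),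
        Φ ⋙ Ψ = 𝟭 (RelKleisli (trivRelMonad J)) ∧
        Ψ ⋙ Φ = 𝟭 (InducedCategory E J.obj) ∧
        (∀ x : A, Φ.obj x = x) ∧ kT (trivRelMonad J) ⋙ Φ = toFullImage J) := by
  constructor
  · subst hres; exact stmt19_aux J L R adj
  · intro _ _
    have h : (trivRelAdj J).induced = trivRelMonad J := rfl
    have := stmt19_aux J J (𝟭 E) (trivRelAdj J)
    rw [h] at this
    exact this
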